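/- If N = q^k * n^2 is an odd perfect number in Eulerian form, then σ(q^k)/n + σ(n)/q^k > 2·(8/5)^(1/4) (as real numbers). -/

import Mathlib

/-- The sum-of-divisors function. -/
def sigma (n : ℕ) : ℕ := ∑ d ∈ n.divisors, d

/-- The abundancy index as a rational number. -/
noncomputable def Iq (x : ℕ) : ℚ := (sigma x : ℚ) / x

/-- The abundancy index as a real number. -/
noncomputable def Ir (x : ℕ) : ℝ := (sigma x : ℝ) / x

/-!
Write `I(x) = σ(x)/x`. The two summands multiply to `I(q^k) I(n)`, and since `σ` is
submultiplicative, `(I(q^k) I(n))² ≥ I(q^k) · I(q^k) I(n²) = 2 I(q^k) > 2`. AM–GM then gives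
`(σ(q^k)/n + σ(n)/q^k)⁴ ≥ 16 (I(q^k) I(n))² > 32 > 16 · 8/5`.
-/

lemma sigma_mul_of_coprime {m n : ℕ} (h : Nat.Coprime m n) :
    sigma (m * n) = sigma m * sigma n :=
  Nat.Coprime.sum_divisors_mul h

lemma sigma_mul_le (m n : ℕ) : sigma (m * n) ≤ sigma m * sigma n := by
  rw [sigma, Nat.divisors_mul, Finset.mul_def, sigma, sigma, Finset.sum_mul_sum,
    ← Finset.sum_product']
  exact Finset.sum_image_le_of_nonneg fun _ _ => Nat.zero_le _

lemma lt_sigma {n : ℕ} (hn : 1 < n) : n < sigma n := by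
  rw [sigma, Nat.sum_divisors_eq_sum_properDivisors_add_self]
  have : 1 ≤ ∑ d ∈ n.properDivisors, d :=
    Finset.single_le_sum (f := fun d => d) (fun _ _ => Nat.zero_le _)
      (Nat.one_mem_properDivisors_iff_one_lt.mpr hn)
  omega

lemma one_lt_Ir {n : ℕ} (hn : 1 < n) : 1 < Ir n := by
  have hpos : (0 : ℝ) < n := by positivity
  rw [Ir, one_lt_div hpos]
  exact_mod_cast lt_sigma hn

lemma Ir_mul_of_coprime {m n : ℕ} (h : Nat.Coprime m n) : Ir (m * n) = Ir m * Ir n := by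
  rw [Ir, Ir, Ir, sigma_mul_of_coprime h, Nat.cast_mul, Nat.cast_mul, mul_div_mul_comm]

lemma Ir_sq_le (n : ℕ) : Ir (n ^ 2) ≤ Ir n ^ 2 := by
  rw [Ir, Ir, div_pow, Nat.cast_pow]
  have h : sigma (n ^ 2) ≤ sigma n ^ 2 := by simpa only [sq] using sigma_mul_le n n
  gcongr
  exact_mod_cast h

lemma Ir_eq_two_of_sigma_eq {N : ℕ} (hN : N ≠ 0) (hperf : sigma N = 2 * N) : Ir N = 2 := by
  rw [Ir, hperf, Nat.cast_mul, Nat.cast_two, mul_div_cancel_right₀ _ (by exact_mod_cast hN)]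

lemma two_lt_sq_Ir_mul_Ir {a n : ℕ} (ha : 1 < a) (h : Ir a * Ir (n ^ 2) = 2) :
    2 < (Ir a * Ir n) ^ 2 := by
  have ha' := one_lt_Ir ha
  calc (2 : ℝ) < Ir a * (Ir a * Ir (n ^ 2)) := by rw [h]; linarith
    _ ≤ Ir a * (Ir a * Ir n ^ 2) := by gcongr; exact Ir_sq_le n
    _ = (Ir a * Ir n) ^ 2 := by ring

lemma two_mul_rpow_quarter_lt_add {x y a : ℝ} (hx : 0 ≤ x) (hy : 0 ≤ y) (ha : 0 ≤ a)
    (h : a < (x * y) ^ 2) : 2 * a ^ (1 / 4 : ℝ) < x + y := by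
  have hpow : (a ^ (1 / 4 : ℝ)) ^ 4 = a := by
    rw [← Real.rpow_natCast, ← Real.rpow_mul ha]; norm_num
  have hamgm : 4 * (x * y) ≤ (x + y) ^ 2 := by rw [← mul_assoc]; exact four_mul_le_sq_add x y
  refine lt_of_pow_lt_pow_left₀ 4 (by positivity) ?_
  calc (2 * a ^ (1 / 4 : ℝ)) ^ 4 = 16 * a := by rw [mul_pow, hpow]; norm_num
    _ < (4 * (x * y)) ^ 2 := by nlinarith
    _ ≤ ((x + y) ^ 2) ^ 2 := by gcongr
    _ = (x + y) ^ 4 := by ring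

theorem stmt19_general (q k n N : ℕ)
    (hq : Nat.Prime q) (hk4 : k % 4 = 1)
    (hco : Nat.Coprime q n) (hN : N = q ^ k * n ^ 2)
    (hodd : Odd N) (hperf : sigma N = 2 * N) :
    (sigma (q ^ k) : ℝ) / n + (sigma n : ℝ) / q ^ k > 2 * (8 / 5 : ℝ) ^ ((1 : ℝ) / 4) := by
  have hN0 : N ≠ 0 := by rintro rfl; simp at hodd
  have hqk : 1 < q ^ k := Nat.one_lt_pow (by omega) hq.one_lt
  have hI : Ir (q ^ k) * Ir (n ^ 2) = 2 := by
    rw [← Ir_mul_of_coprime ((hco.pow_right 2).pow_left k), ← hN]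
    exact Ir_eq_two_of_sigma_eq hN0 hperf
  have hprod : (sigma (q ^ k) : ℝ) / n * ((sigma n : ℝ) / q ^ k) = Ir (q ^ k) * Ir n := by
    rw [Ir, Ir, Nat.cast_pow, div_mul_div_comm, div_mul_div_comm, mul_comm (n : ℝ)]
  apply two_mul_rpow_quarter_lt_add (by positivity) (by positivity) (by norm_num)
  rw [hprod]
  linarith [two_lt_sq_Ir_mul_Ir hqk hI]

theorem stmt19 (q k n N : ℕ)
    (hq : Nat.Prime q) (hq4 : q % 4 = 1) (hk4 : k % 4 = 1)
    (hco : Nat.Coprime q n) (hN : N = q ^ k * n ^ 2)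
    (hodd : Odd N) (hperf : sigma N = 2 * N) :
    (sigma (q ^ k) : ℝ) / n + (sigma n : ℝ) / q ^ k > 2 * (8 / 5 : ℝ) ^ ((1 : ℝ) / 4) :=
  stmt19_general q k n N hq hk4 hco hN hodd hperf
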